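/- Let g be a Lorentzian metric on ℝ^{1+n} satisfying condition (1.1), fix a unit vector ω ∈ ℝ^n, and suppose: every γ_z (z ∈ Σ₋) is defined on all of ℝ; the map Φ(z,r) = γ_z(r) is a diffeomorphism from Σ₋ × ℝ onto ℝ^{1+n}; and φ : ℝ^{1+n} → ℝ is a smooth function with g(dφ, dφ) = 0, φ = t − x·ω on {x·ω ≤ −1}, and dφ at γ_z(r) equal to −(γ̇_z(r))^♭ for all z ∈ Σ₋ and r ∈ ℝ. Define the vector field W = −(dφ)^♯. Then: (i) W is everywhere future-directed and null, W is tangential to every level set {φ = s}, W = ∂_t + ω·∇_x on {x·ω ≤ −1}, and the integral curves of W are exactly the geodesics γ_z for z ∈ Σ₋; (ii) for every smooth future-directed causal curve γ one has (φ∘γ)'(r) ≥ 0 for all r, with equality at r if and only if γ̇(r) = λ·W(γ(r)) for some λ > 0; analogously, for every smooth past-directed causal curve γ one has (φ∘γ)'(r) ≤ 0, with equality at r if and only if γ̇(r) = −λ·W(γ(r)) for some λ > 0. -/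

import Mathlib

noncomputable section

open Set Filter Topology
open scoped RealInnerProductSpace

abbrev Evec (n : ℕ) : Type := EuclideanSpace ℝ (Fin n)
abbrev Vec (n : ℕ) : Type := ℝ × Evec n

/-- The Minkowski bilinear form on ℝ^{1+n}. -/
def mink {n : ℕ} (v w : Vec n) : ℝ := -(v.1 * w.1) + ⟪v.2, w.2⟫

/-- A Lorentzian metric on ℝ^{1+n}: a smooth assignment of nondegenerate symmetric
bilinear forms of signature (−,+,…,+). -/
structure LorentzMetric (n : ℕ) where
  g : Vec n → Vec n →L[ℝ] Vec n →L[ℝ] ℝ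
  smooth : ContDiff ℝ (⊤ : ℕ∞) g
  symm : ∀ p v w, g p v w = g p w v
  sig : ∀ p, ∃ L : Vec n ≃ₗ[ℝ] Vec n, ∀ v w, g p v w = mink (L v) (L w)

variable {n : ℕ}

def LorentzMetric.Timelike (M : LorentzMetric n) (p v : Vec n) : Prop := M.g p v v < 0
def LorentzMetric.CausalVec (M : LorentzMetric n) (p v : Vec n) : Prop := v ≠ 0 ∧ M.g p v v ≤ 0
def LorentzMetric.NullVec (M : LorentzMetric n) (p v : Vec n) : Prop := v ≠ 0 ∧ M.g p v v = 0

/-- A time orientation: a smooth everywhere timelike vector field. -/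
structure TimeOrientation {n : ℕ} (M : LorentzMetric n) where
  Z : Vec n → Vec n
  smooth : ContDiff ℝ (⊤ : ℕ∞) Z
  timelike : ∀ p, M.Timelike p (Z p)

def FutureDir (M : LorentzMetric n) (O : TimeOrientation M) (p v : Vec n) : Prop :=
  M.CausalVec p v ∧ M.g p v (O.Z p) < 0

def PastDir (M : LorentzMetric n) (O : TimeOrientation M) (p v : Vec n) : Prop :=
  M.CausalVec p v ∧ 0 < M.g p v (O.Z p)

/-- Condition (1.1): g = g_Min outside ℝ × B̄ and the time orientation is ∂_t there. -/
def Cond11 (M : LorentzMetric n) (O : TimeOrientation M) : Prop :=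
  ∀ p : Vec n, 1 < ‖p.2‖ → (∀ v w, M.g p v w = mink v w) ∧ O.Z p = ((1 : ℝ), (0 : Evec n))

/-- A piecewise smooth curve on [a,b] all of whose one-sided tangent vectors satisfy `Dir`. -/
def PiecewiseDirOn {n : ℕ} (Dir : Vec n → Vec n → Prop) (γ : ℝ → Vec n) (a b : ℝ) : Prop :=
  a < b ∧ ∃ (k : ℕ) (s : Fin (k + 1) → ℝ), s 0 = a ∧ s (Fin.last k) = b ∧ StrictMono s ∧
    ∀ i : Fin k, ContDiffOn ℝ (⊤ : ℕ∞) γ (Icc (s i.castSucc) (s i.succ)) ∧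
      ∀ r ∈ Icc (s i.castSucc) (s i.succ),
        Dir (γ r) (derivWithin γ (Icc (s i.castSucc) (s i.succ)) r)

def FutureCausalOn (M : LorentzMetric n) (O : TimeOrientation M) (γ : ℝ → Vec n) (a b : ℝ) : Prop :=
  PiecewiseDirOn (FutureDir M O) γ a b

def PastCausalOn (M : LorentzMetric n) (O : TimeOrientation M) (γ : ℝ → Vec n) (a b : ℝ) : Prop :=
  PiecewiseDirOn (PastDir M O) γ a b

def FutureTimelikeOn (M : LorentzMetric n) (O : TimeOrientation M) (γ : ℝ → Vec n) (a b : ℝ) : Prop :=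
  PiecewiseDirOn (fun p v => M.Timelike p v ∧ M.g p v (O.Z p) < 0) γ a b

def PastTimelikeOn (M : LorentzMetric n) (O : TimeOrientation M) (γ : ℝ → Vec n) (a b : ℝ) : Prop :=
  PiecewiseDirOn (fun p v => M.Timelike p v ∧ 0 < M.g p v (O.Z p)) γ a b

/-- The causal relation p ≤ q. -/
def CausalLE (M : LorentzMetric n) (O : TimeOrientation M) (p q : Vec n) : Prop :=
  p = q ∨ ∃ (γ : ℝ → Vec n) (a b : ℝ), FutureCausalOn M O γ a b ∧ γ a = p ∧ γ b = q

def Jplus (M : LorentzMetric n) (O : TimeOrientation M) (S : Set (Vec n)) : Set (Vec n) :=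
  {q | ∃ p ∈ S, CausalLE M O p q}

def Jminus (M : LorentzMetric n) (O : TimeOrientation M) (S : Set (Vec n)) : Set (Vec n) :=
  {q | ∃ p ∈ S, CausalLE M O q p}

/-- The filter of approach to an extended real endpoint from the right, within ℝ. -/
def rightLimFilter (a : EReal) : Filter ℝ :=
  Filter.comap (fun r : ℝ => (r : EReal)) (nhdsWithin a (Ioi a))

def leftLimFilter (b : EReal) : Filter ℝ :=
  Filter.comap (fun r : ℝ => (r : EReal)) (nhdsWithin b (Iio b))

/-- The open interval (a,b) of extended reals, as a set of reals. -/
def erealIoo (a b : EReal) : Set ℝ := {r : ℝ | a < (r : EReal) ∧ (r : EReal) < b}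

/-- A (future- or past-directed) timelike curve on the open interval (a,b). -/
def TimelikeCurve (M : LorentzMetric n) (O : TimeOrientation M) (γ : ℝ → Vec n) (a b : EReal) : Prop :=
  a < b ∧ ((∀ c d : ℝ, a < (c : EReal) → (d : EReal) < b → c < d → FutureTimelikeOn M O γ c d) ∨
           (∀ c d : ℝ, a < (c : EReal) → (d : EReal) < b → c < d → PastTimelikeOn M O γ c d))

/-- An inextendible timelike curve: no limit at either endpoint. -/
def InextTimelike (M : LorentzMetric n) (O : TimeOrientation M) (γ : ℝ → Vec n) (a b : EReal) : Prop :=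
  TimelikeCurve M O γ a b ∧ (¬ ∃ L, Tendsto γ (rightLimFilter a) (nhds L)) ∧
    (¬ ∃ L, Tendsto γ (leftLimFilter b) (nhds L))

/-- A Cauchy surface: met exactly once by every inextendible timelike curve. -/
def IsCauchySurface (M : LorentzMetric n) (O : TimeOrientation M) (S : Set (Vec n)) : Prop :=
  ∀ (γ : ℝ → Vec n) (a b : EReal), InextTimelike M O γ a b →
    ∃! r : ℝ, r ∈ erealIoo a b ∧ γ r ∈ S

/-- An inextendible future-directed causal curve. -/
def InextFutureCausal (M : LorentzMetric n) (O : TimeOrientation M) (γ : ℝ → Vec n) (a b : EReal) : Prop :=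
  a < b ∧ (∀ c d : ℝ, a < (c : EReal) → (d : EReal) < b → c < d → FutureCausalOn M O γ c d) ∧
  (¬ ∃ L, Tendsto γ (rightLimFilter a) (nhds L)) ∧ (¬ ∃ L, Tendsto γ (leftLimFilter b) (nhds L))

/-- A Cauchy temporal function. -/
structure CauchyTemporal {n : ℕ} (M : LorentzMetric n) (O : TimeOrientation M) where
  τ : Vec n → ℝ
  smooth : ContDiff ℝ (⊤ : ℕ∞) τ
  surj : Function.Surjective τ
  grad : Vec n → Vec n
  grad_spec : ∀ p w, M.g p (grad p) w = fderiv ℝ τ p w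
  grad_timelike : ∀ p, M.Timelike p (grad p)
  grad_past : ∀ p, PastDir M O p (grad p)
  level_conn : ∀ r : ℝ, IsConnected (τ ⁻¹' {r})
  level_spacelike : ∀ p v, v ≠ (0 : Vec n) → fderiv ℝ τ p v = 0 → 0 < M.g p v v
  level_cauchy : ∀ r : ℝ, IsCauchySurface M O (τ ⁻¹' {r})
  mono : ∀ (γ : ℝ → Vec n) (a b : EReal), InextFutureCausal M O γ a b →
    StrictMonoOn (fun r => τ (γ r)) (erealIoo a b) ∧
      (fun r => τ (γ r)) '' (erealIoo a b) = univ

/-- Condition (GH): no closed causal curves, compact causal diamonds, and existence of a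
Cauchy temporal function. -/
def CondGH (M : LorentzMetric n) (O : TimeOrientation M) : Prop :=
  (¬ ∃ (γ : ℝ → Vec n) (a b : ℝ),
      (FutureCausalOn M O γ a b ∨ PastCausalOn M O γ a b) ∧ γ a = γ b) ∧
  (∀ p q : Vec n, IsCompact (Jplus M O {p} ∩ Jminus M O {q})) ∧
  Nonempty (CauchyTemporal M O)

/-- Geodesic equation on a set, in coordinate-free form equivalent to
γ̈^k + Γ^k_{ij} γ̇^i γ̇^j = 0. -/
def IsGeodesicOn (M : LorentzMetric n) (γ : ℝ → Vec n) (s : Set ℝ) : Prop :=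
  ContDiffOn ℝ (⊤ : ℕ∞) γ s ∧ ∀ r ∈ s, ∀ u : Vec n,
    M.g (γ r) (derivWithin (fun t => derivWithin γ s t) s r) u
      + (fderiv ℝ M.g (γ r)) (derivWithin γ s r) (derivWithin γ s r) u
      - (1 / 2) * ((fderiv ℝ M.g (γ r)) u) (derivWithin γ s r) (derivWithin γ s r) = 0

def SigMinus {n : ℕ} (ω : Evec n) : Set (Vec n) := {p | ⟪p.2, ω⟫ = -1}
def SigPlus {n : ℕ} (ω : Evec n) : Set (Vec n) := {p | ⟪p.2, ω⟫ = 1}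
def SigMinusAt {n : ℕ} (ω : Evec n) (σ : ℝ) : Set (Vec n) := {p | p.1 = σ ∧ ⟪p.2, ω⟫ = -1}
def SigPlusAt {n : ℕ} (ω : Evec n) (σ : ℝ) : Set (Vec n) := {p | p.1 = σ ∧ ⟪p.2, ω⟫ = 1}

/-- The family of maximal geodesics γ_z, z ∈ Σ₋, with γ_z(0) = z, γ̇_z(0) = (1,ω),
defined on (−∞, ρ(z)). -/
structure GeodesicFamily {n : ℕ} (M : LorentzMetric n) (ω : Evec n) where
  ρ : Vec n → EReal
  γ : Vec n → ℝ → Vec n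
  ρ_pos : ∀ z ∈ SigMinus ω, 0 < ρ z
  geo : ∀ z ∈ SigMinus ω, IsGeodesicOn M (γ z) {r : ℝ | (r : EReal) < ρ z}
  init : ∀ z ∈ SigMinus ω, γ z 0 = z
  init' : ∀ z ∈ SigMinus ω, deriv (γ z) 0 = ((1 : ℝ), ω)
  maximal : ∀ z ∈ SigMinus ω, ∀ (b : EReal) (η : ℝ → Vec n),
    IsGeodesicOn M η {r : ℝ | (r : EReal) < b} → η 0 = z → deriv η 0 = ((1 : ℝ), ω) → b ≤ ρ z

/-- The exit time r₊(z) = sup{r < ρ(z) : γ_z([0,r]) ⊆ {x·ω ≤ 1}}. -/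
def exitTime {n : ℕ} {M : LorentzMetric n} {ω : Evec n} (F : GeodesicFamily M ω) (z : Vec n) : EReal :=
  sSup ((fun r : ℝ => (r : EReal)) ''
    {r : ℝ | (r : EReal) < F.ρ z ∧ ∀ s ∈ Icc (0 : ℝ) r, ⟪(F.γ z s).2, ω⟫ ≤ 1})

/-- The trapped set 𝒯_g. -/
def Trapped {n : ℕ} {M : LorentzMetric n} {ω : Evec n} (F : GeodesicFamily M ω) : Set (Vec n) :=
  {z | z ∈ SigMinus ω ∧ exitTime F z = F.ρ z}

/-- The SPW scattering hypothesis for the weight λ. -/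
def SPW {n : ℕ} (M : LorentzMetric n) (ω : Evec n) (F : GeodesicFamily M ω) (lam : Vec n → ℝ) : Prop :=
  ∀ σ : ℝ,
    {p : Vec n × Vec n | ∃ z ∈ SigMinusAt ω σ, z ∉ Trapped F ∧
        p = (F.γ z (exitTime F z).toReal, deriv (F.γ z) (exitTime F z).toReal)}
    = {p : Vec n × Vec n | ∃ w ∈ SigPlusAt ω (σ + 2), p = (w, lam w • ((1 : ℝ), ω))}

/-- A diffeomorphism between subsets of normed spaces. -/
def IsDiffeoOn {X Y : Type*} [NormedAddCommGroup X] [NormedSpace ℝ X]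
    [NormedAddCommGroup Y] [NormedSpace ℝ Y] (F : X → Y) (s : Set X) (t : Set Y) : Prop :=
  ContDiffOn ℝ (⊤ : ℕ∞) F s ∧ Set.BijOn F s t ∧
    ∃ G : Y → X, ContDiffOn ℝ (⊤ : ℕ∞) G t ∧ (∀ x ∈ s, G (F x) = x) ∧ ∀ y ∈ t, F (G y) = y

/-- The eikonal equation g(dφ, dφ) = 0. -/
def Eikonal (M : LorentzMetric n) (φ : Vec n → ℝ) : Prop :=
  ∀ p, ∃ X : Vec n, (∀ w, M.g p X w = fderiv ℝ φ p w) ∧ M.g p X X = 0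

/-- X = (dF)^♯, the g-gradient of F. -/
def IsGGrad (M : LorentzMetric n) (F : Vec n → ℝ) (X : Vec n → Vec n) : Prop :=
  ∀ p w, M.g p (X p) w = fderiv ℝ F p w

/-- Future-directed causal vectors for the Minkowski metric with orientation ∂_t. -/
def MinFutureDir {n : ℕ} (v : Vec n) : Prop := (v ≠ 0 ∧ mink v v ≤ 0) ∧ 0 < v.1

def CausalLEMin {n : ℕ} (p q : Vec n) : Prop :=
  p = q ∨ ∃ (γ : ℝ → Vec n) (a b : ℝ),
    PiecewiseDirOn (fun _ v => MinFutureDir v) γ a b ∧ γ a = p ∧ γ b = q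

/-- Causal past for the Minkowski metric. -/
def JminusMin {n : ℕ} (S : Set (Vec n)) : Set (Vec n) := {q | ∃ p ∈ S, CausalLEMin q p}

/-- The coordinate pairing between covectors (identified with vectors) and vectors. -/
def cdot {n : ℕ} (v w : Vec n) : ℝ := v.1 * w.1 + ⟪v.2, w.2⟫



section AuxLemmas

variable {n : ℕ}

lemma mink_self_eq (v : Vec n) : mink v v = -(v.1*v.1) + ‖v.2‖^2 := by
  rw [mink, real_inner_self_eq_norm_sq]

lemma mink_nondeg {v : Vec n} (h : ∀ w, mink v w = 0) : v = 0 := by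
  have h1 := h (-v.1, v.2)
  simp only [mink] at h1
  rw [real_inner_self_eq_norm_sq] at h1
  have hn2 : ‖v.2‖ = 0 := by nlinarith [sq_nonneg v.1, norm_nonneg v.2, sq_nonneg ‖v.2‖]
  have h2 : v.2 = 0 := norm_eq_zero.mp hn2
  have h1' : v.1 = 0 := by nlinarith
  exact Prod.ext_iff.mpr ⟨h1', h2⟩

lemma mink_smul_right (l : ℝ) (u v : Vec n) : mink u (l • v) = l * mink u v := by
  simp only [mink, Prod.smul_fst, Prod.smul_snd, smul_eq_mul, real_inner_smul_right]
  ring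

lemma causal_sq {u : Vec n} (h : mink u u ≤ 0) : ‖u.2‖^2 ≤ u.1^2 := by
  have := mink_self_eq u; nlinarith

lemma causal_fst_ne {u : Vec n} (h : mink u u ≤ 0) (h0 : u ≠ 0) : u.1 ≠ 0 := by
  intro h1
  apply h0
  have h2 := causal_sq h
  rw [h1] at h2
  have h3 : ‖u.2‖ = 0 := by nlinarith [norm_nonneg u.2]
  exact Prod.ext_iff.mpr ⟨h1, norm_eq_zero.mp h3⟩

lemma timelike_sq {z : Vec n} (h : mink z z < 0) : ‖z.2‖^2 < z.1^2 := by
  have := mink_self_eq z; nlinarith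

lemma mink_sign {u z : Vec n} (hu : mink u u ≤ 0) (hu0 : u ≠ 0) (hz : mink z z < 0)
    (huz : mink u z < 0) : 0 < u.1 * z.1 := by
  by_contra hcon
  push_neg at hcon
  have h1 : ‖u.2‖^2 ≤ u.1^2 := causal_sq hu
  have h2 : ‖z.2‖^2 < z.1^2 := timelike_sq hz
  have h3 : u.1 ≠ 0 := causal_fst_ne hu hu0
  have h4 : (0:ℝ) < u.1^2 := by positivity
  have cs := abs_real_inner_le_norm u.2 z.2
  have hI : -(‖u.2‖*‖z.2‖) ≤ ⟪u.2, z.2⟫ := by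
    have := (abs_le.mp cs).1; linarith
  rw [mink] at huz
  have h5 : ‖u.2‖*‖z.2‖ > -(u.1*z.1) := by linarith
  have h6 : (0:ℝ) ≤ -(u.1*z.1) := by linarith
  have h7 : (u.1*z.1)^2 < (‖u.2‖*‖z.2‖)^2 := by nlinarith
  nlinarith [mul_le_mul_of_nonneg_right h1 (sq_nonneg ‖z.2‖),
    mul_lt_mul_of_pos_left h2 h4]

lemma prod_ge_aux {a b c d : ℝ} (h1 : c^2 ≤ a^2) (h2 : d^2 ≤ b^2) (hc : 0 ≤ c) (hd : 0 ≤ d)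
    (hab : 0 < a*b) : c*d ≤ a*b := by
  nlinarith [mul_nonneg hc hd, mul_le_mul h1 h2 (sq_nonneg d) (sq_nonneg a)]

lemma mink_null_orth {u z : Vec n} (huu : mink u u = 0) (hz : mink z z < 0)
    (huz : mink u z = 0) : u = 0 := by
  have h1 : ‖u.2‖^2 = u.1^2 := by have := mink_self_eq u; nlinarith
  have h2 : ‖z.2‖^2 < z.1^2 := timelike_sq hz
  have cs := abs_real_inner_le_norm u.2 z.2
  rw [mink] at huz
  have hIe : ⟪u.2, z.2⟫ = u.1*z.1 := by linarith
  have hsq : (u.1*z.1)^2 ≤ ‖u.2‖^2*‖z.2‖^2 := by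
    have hb := abs_le.mp cs
    calc (u.1*z.1)^2 = ⟪u.2, z.2⟫^2 := by rw [hIe]
      _ ≤ (‖u.2‖*‖z.2‖)^2 := sq_le_sq' (by linarith [hb.1]) hb.2
      _ = ‖u.2‖^2*‖z.2‖^2 := by ring
  have hu1 : u.1 = 0 := by
    have h9 : u.1^2 ≤ 0 := by nlinarith
    have := sq_nonneg u.1
    nlinarith
  have hu2 : ‖u.2‖ = 0 := by
    have : ‖u.2‖^2 = 0 := by rw [h1, hu1]; ring
    nlinarith [norm_nonneg u.2]
  exact Prod.ext_iff.mpr ⟨hu1, norm_eq_zero.mp hu2⟩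

lemma mink_key {u v z : Vec n} (hu0 : u ≠ 0) (huu : mink u u = 0)
    (hv0 : v ≠ 0) (hvv : mink v v ≤ 0) (hz : mink z z < 0)
    (huz : mink u z < 0) (hvz : mink v z < 0) :
    mink u v ≤ 0 ∧ (mink u v = 0 ↔ ∃ l : ℝ, 0 < l ∧ v = l • u) := by
  have hsu := mink_sign (le_of_eq huu) hu0 hz huz
  have hsv := mink_sign hvv hv0 hz hvz
  have hz1 : z.1 ≠ 0 := by
    intro h; rw [h, mul_zero] at hsu; exact lt_irrefl _ hsu
  have hz1sq : (0:ℝ) < z.1^2 := by positivity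
  have huv1 : 0 < u.1 * v.1 := by nlinarith [mul_pos hsu hsv]
  have h1 : ‖u.2‖^2 = u.1^2 := by have := mink_self_eq u; nlinarith
  have h2 : ‖v.2‖^2 ≤ v.1^2 := causal_sq hvv
  have hu1 : u.1 ≠ 0 := causal_fst_ne (le_of_eq huu) hu0
  have hv1 : v.1 ≠ 0 := causal_fst_ne hvv hv0
  have cs : ⟪u.2, v.2⟫ ≤ ‖u.2‖*‖v.2‖ := real_inner_le_norm u.2 v.2
  have hub : ‖u.2‖*‖v.2‖ ≤ u.1*v.1 :=
    prod_ge_aux (le_of_eq h1) h2 (norm_nonneg _) (norm_nonneg _) huv1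
  have hle : mink u v ≤ 0 := by rw [mink]; linarith
  refine ⟨hle, ?_, ?_⟩
  · intro h0
    rw [mink] at h0
    have hIe : ⟪u.2, v.2⟫ = u.1*v.1 := by linarith
    have he1 : ⟪u.2, v.2⟫ = ‖u.2‖*‖v.2‖ := le_antisymm cs (by linarith)
    have he2 : ‖u.2‖*‖v.2‖ = u.1*v.1 := by linarith
    have hu2pos : 0 < ‖u.2‖ := by
      rcases (norm_nonneg u.2).lt_or_eq with h | h
      · exact h
      · exfalso; apply hu1
        have : u.1^2 = 0 := by rw [← h1, ← h]; ring
        nlinarith [sq_nonneg u.1]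
    have hveq : ‖v.2‖ • u.2 = ‖u.2‖ • v.2 := inner_eq_norm_mul_iff_real.mp he1
    set l : ℝ := v.1 / u.1 with hl
    have hleq : l = (u.1*v.1)/(u.1^2) := by rw [hl]; field_simp
    have hlpos : 0 < l := by rw [hleq]; positivity
    have hv1eq : v.1 = l * u.1 := by rw [hl]; field_simp
    have hn2 : ‖v.2‖ = l * ‖u.2‖ := by
      have hstep : ‖u.2‖*‖v.2‖ = ‖u.2‖*(l*‖u.2‖) := by
        rw [he2, hv1eq]
        nlinarith [h1]
      exact mul_left_cancel₀ (ne_of_gt hu2pos) hstep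
    have hv2eq : v.2 = l • u.2 := by
      have hstep : ‖u.2‖ • v.2 = ‖u.2‖ • (l • u.2) := by
        rw [← hveq, hn2, mul_comm, mul_smul]
      exact smul_right_injective _ (ne_of_gt hu2pos) hstep
    refine ⟨l, hlpos, Prod.ext_iff.mpr ⟨?_, ?_⟩⟩
    · simpa using hv1eq
    · simpa using hv2eq
  · rintro ⟨l, hl, rfl⟩
    rw [mink_smul_right, huu, mul_zero]

lemma g_nondeg_aux (M : LorentzMetric n) (p : Vec n) {v : Vec n}
    (h : ∀ w, M.g p v w = 0) : v = 0 := by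
  obtain ⟨L, hL⟩ := M.sig p
  have hm : ∀ y : Vec n, mink (L v) y = 0 := by
    intro y
    have h' := h (L.symm y)
    rw [hL] at h'
    simpa using h'
  exact L.map_eq_zero_iff.mp (mink_nondeg hm)

lemma g_ext (M : LorentzMetric n) (p : Vec n) {v w : Vec n}
    (h : ∀ x, M.g p v x = M.g p w x) : v = w := by
  have h0 : ∀ x, M.g p (v - w) x = 0 := by
    intro x
    rw [map_sub, ContinuousLinearMap.sub_apply, h x, sub_self]
  exact sub_eq_zero.mp (g_nondeg_aux M p h0)

lemma g_key (M : LorentzMetric n) (p : Vec n) {u v z : Vec n}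
    (hu0 : u ≠ 0) (huu : M.g p u u = 0) (hv0 : v ≠ 0) (hvv : M.g p v v ≤ 0)
    (hz : M.g p z z < 0) (huz : M.g p u z < 0) (hvz : M.g p v z < 0) :
    M.g p u v ≤ 0 ∧ (M.g p u v = 0 ↔ ∃ l : ℝ, 0 < l ∧ v = l • u) := by
  obtain ⟨L, hL⟩ := M.sig p
  have key := mink_key (u := L u) (v := L v) (z := L z)
    (fun h => hu0 (L.map_eq_zero_iff.mp h))
    (by rw [← hL]; exact huu)
    (fun h => hv0 (L.map_eq_zero_iff.mp h))
    (by rw [← hL]; exact hvv)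
    (by rw [← hL]; exact hz)
    (by rw [← hL]; exact huz)
    (by rw [← hL]; exact hvz)
  rw [hL]
  refine ⟨key.1, ?_⟩
  rw [key.2]
  refine exists_congr fun l => and_congr_right fun _ => ?_
  rw [← map_smul]
  exact ⟨fun h => L.injective h, fun h => by rw [h]⟩

lemma const_of_hasDerivAt_zero {E : Type*} [NormedAddCommGroup E] [NormedSpace ℝ E]
    {f : ℝ → E} {a b : ℝ} (h : ∀ r ∈ Set.Ioo a b, HasDerivAt f 0 r) :
    ∀ x ∈ Set.Ioo a b, ∀ y ∈ Set.Ioo a b, f x = f y := by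
  intro x hx y hy
  have hz : ∀ r ∈ Set.Ioo a b, HasFDerivWithinAt f (0 : ℝ →L[ℝ] E) (Set.Ioo a b) r := by
    intro r hr
    have h' := hasDerivAt_iff_hasFDerivAt.mp (h r hr)
    have he : ContinuousLinearMap.toSpanSingleton ℝ (0 : E) = 0 := by
      ext t; simp
    rw [he] at h'
    exact h'.hasFDerivWithinAt
  have hb := Convex.norm_image_sub_le_of_norm_hasFDerivWithin_le (C := 0) hz
    (fun r _ => norm_zero.le) (convex_Ioo a b) hx hy
  have h0 : ‖f y - f x‖ ≤ 0 := by simpa using hb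
  have := norm_le_zero_iff.mp h0
  exact (sub_eq_zero.mp this).symm

lemma region_flat {n : ℕ} (M : LorentzMetric n) (O : TimeOrientation M) (h11 : Cond11 M O)
    {ω : Evec n} (hω : ‖ω‖ = 1) {p : Vec n} (hp : ⟪p.2, ω⟫ ≤ -1) :
    (∀ v w, M.g p v w = mink v w) ∧ O.Z p = ((1 : ℝ), (0 : Evec n)) := by
  set e : Vec n := ((0:ℝ), ω) with he
  set seq : ℕ → Vec n := fun k => p - ((1:ℝ)/(k+1)) • e with hseq
  have hmem : ∀ k : ℕ, 1 < ‖(seq k).2‖ := by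
    intro k
    have hk : (0:ℝ) < 1/((k:ℝ)+1) := by positivity
    have h2 : (seq k).2 = p.2 - ((1:ℝ)/((k:ℝ)+1)) • ω := by simp [hseq, he]
    have hin : ⟪(seq k).2, ω⟫ = ⟪p.2, ω⟫ - 1/((k:ℝ)+1) := by
      rw [h2, inner_sub_left, real_inner_smul_left, real_inner_self_eq_norm_sq, hω]
      ring
    have habs := abs_real_inner_le_norm (seq k).2 ω
    rw [hω, mul_one] at habs
    have hlb : 1 + 1/((k:ℝ)+1) ≤ |⟪(seq k).2, ω⟫| := by
      rw [hin, abs_of_nonpos (by linarith)]; linarith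
    linarith
  have hts : Tendsto seq atTop (𝓝 p) := by
    have h0 : Tendsto (fun k : ℕ => ((1:ℝ)/((k:ℝ)+1)) • e) atTop (𝓝 ((0:ℝ) • e)) :=
      tendsto_one_div_add_atTop_nhds_zero_nat.smul_const e
    have h1 := (tendsto_const_nhds (x := p) (f := atTop)).sub h0
    simpa [hseq, one_div] using h1
  constructor
  · intro v w
    have hc : Continuous fun q : Vec n => M.g q v w :=
      (M.smooth.continuous.clm_apply continuous_const).clm_apply continuous_const
    have h1 : Tendsto (fun k => M.g (seq k) v w) atTop (𝓝 (M.g p v w)) :=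
      (hc.tendsto p).comp hts
    have h2 : (fun k => M.g (seq k) v w) = fun _ => mink v w := by
      funext k; exact (h11 (seq k) (hmem k)).1 v w
    rw [h2] at h1
    exact (tendsto_nhds_unique h1 tendsto_const_nhds)
  · have h1 : Tendsto (fun k => O.Z (seq k)) atTop (𝓝 (O.Z p)) :=
      (O.smooth.continuous.tendsto p).comp hts
    have h2 : (fun k => O.Z (seq k)) = fun _ => ((1:ℝ), (0:Evec n)) := by
      funext k; exact (h11 (seq k) (hmem k)).2
    rw [h2] at h1
    exact tendsto_nhds_unique h1 tendsto_const_nhds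

end AuxLemmas

set_option maxHeartbeats 2000000 in
/-- Lemma 4.3: properties of the null gradient field W = −(dφ)^♯ of an eikonal solution:
it is future-directed, null, tangent to the level sets of φ, equals ∂_t + ω·∇_x on
{x·ω ≤ −1}, its integral curves are exactly the geodesics γ_z; and φ is monotone along
causal curves, with the stated equality case. -/
theorem eikonal_gradient_field (n : ℕ) (hn : 2 ≤ n)
    (M : LorentzMetric n) (O : TimeOrientation M) (h11 : Cond11 M O)
    (ω : Evec n) (hω : ‖ω‖ = 1) (F : GeodesicFamily M ω)
    (hρ : ∀ z ∈ SigMinus ω, F.ρ z = ⊤)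
    (hdiffeo : IsDiffeoOn (fun q : Vec n × ℝ => F.γ q.1 q.2)
      ((SigMinus ω) ×ˢ (Set.univ : Set ℝ)) (Set.univ : Set (Vec n)))
    (φ : Vec n → ℝ) (hφ : ContDiff ℝ (⊤ : ℕ∞) φ) (heik : Eikonal M φ)
    (hbc : ∀ p : Vec n, ⟪p.2, ω⟫ ≤ -1 → φ p = p.1 - ⟪p.2, ω⟫)
    (hflat : ∀ z ∈ SigMinus ω, ∀ r : ℝ, ∀ u : Vec n,
      fderiv ℝ φ (F.γ z r) u = - M.g (F.γ z r) (deriv (F.γ z) r) u)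
    (W : Vec n → Vec n)
    (hW : ∀ p w : Vec n, M.g p (W p) w = - fderiv ℝ φ p w) :
    -- (i)
    ((∀ p : Vec n, FutureDir M O p (W p) ∧ M.g p (W p) (W p) = 0) ∧
     (∀ p : Vec n, fderiv ℝ φ p (W p) = 0) ∧
     (∀ p : Vec n, ⟪p.2, ω⟫ ≤ -1 → W p = ((1 : ℝ), ω)) ∧
     (∀ z ∈ SigMinus ω, ∀ r : ℝ, HasDerivAt (F.γ z) (W (F.γ z r)) r) ∧
     (∀ (c : ℝ → Vec n) (a b : ℝ), a < b →
        (∀ r ∈ Set.Ioo a b, HasDerivAt c (W (c r)) r) →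
        ∃ z ∈ SigMinus ω, ∃ t₀ : ℝ, ∀ r ∈ Set.Ioo a b, c r = F.γ z (r - t₀))) ∧
    -- (ii)
    ((∀ (c : ℝ → Vec n) (a b : ℝ), a < b → ContDiffOn ℝ (⊤ : ℕ∞) c (Set.Ioo a b) →
        (∀ r ∈ Set.Ioo a b, FutureDir M O (c r) (derivWithin c (Set.Ioo a b) r)) →
        ∀ r ∈ Set.Ioo a b,
          0 ≤ derivWithin (fun s => φ (c s)) (Set.Ioo a b) r ∧
          (derivWithin (fun s => φ (c s)) (Set.Ioo a b) r = 0 ↔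
            ∃ l : ℝ, 0 < l ∧ derivWithin c (Set.Ioo a b) r = l • W (c r))) ∧
     (∀ (c : ℝ → Vec n) (a b : ℝ), a < b → ContDiffOn ℝ (⊤ : ℕ∞) c (Set.Ioo a b) →
        (∀ r ∈ Set.Ioo a b, PastDir M O (c r) (derivWithin c (Set.Ioo a b) r)) →
        ∀ r ∈ Set.Ioo a b,
          derivWithin (fun s => φ (c s)) (Set.Ioo a b) r ≤ 0 ∧
          (derivWithin (fun s => φ (c s)) (Set.Ioo a b) r = 0 ↔
            ∃ l : ℝ, 0 < l ∧ derivWithin c (Set.Ioo a b) r = (-l) • W (c r)))) := by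
  classical
  -- W is null (eikonal equation)
  have hWnull : ∀ p, M.g p (W p) (W p) = 0 := by
    intro p
    obtain ⟨X, hX1, hX2⟩ := heik p
    have hWX : W p = -X := by
      apply g_ext M p
      intro x
      rw [hW p x, ← hX1 x, map_neg, ContinuousLinearMap.neg_apply]
    rw [hWX]
    simp only [map_neg, ContinuousLinearMap.neg_apply, neg_neg, hX2]
  have hdφW : ∀ p, fderiv ℝ φ p (W p) = 0 := by
    intro p
    have h := hW p (W p)
    rw [hWnull p] at h
    linarith
  -- geodesics are globally defined and smooth
  have hγs : ∀ z ∈ SigMinus ω, ContDiff ℝ (⊤ : ℕ∞) (F.γ z) := by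
    intro z hz
    have hset : {r : ℝ | (r : EReal) < F.ρ z} = Set.univ := by
      rw [hρ z hz]; ext r; simp [EReal.coe_lt_top]
    have h := (F.geo z hz).1
    rw [hset] at h
    exact contDiffOn_univ.mp h
  have hWγ : ∀ z ∈ SigMinus ω, ∀ r : ℝ, W (F.γ z r) = deriv (F.γ z) r := by
    intro z hz r
    apply g_ext M (F.γ z r)
    intro x
    rw [hW, hflat z hz r x, neg_neg]
  have hγd : ∀ z ∈ SigMinus ω, ∀ r : ℝ, HasDerivAt (F.γ z) (W (F.γ z r)) r := by
    intro z hz r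
    rw [hWγ z hz r]
    exact (((hγs z hz).differentiable (by simp)) r).hasDerivAt
  -- diffeomorphism data
  obtain ⟨hFsm, hFbij, G, hGsm, hGF, hFG⟩ := hdiffeo
  have hGc : ContDiff ℝ (⊤ : ℕ∞) G := contDiffOn_univ.mp hGsm
  have hFGp : ∀ p : Vec n, F.γ (G p).1 (G p).2 = p := fun p => hFG p (Set.mem_univ p)
  have hGmem : ∀ p : Vec n, G p ∈ (SigMinus ω) ×ˢ (Set.univ : Set ℝ) := by
    intro p
    obtain ⟨x, hx, hxp⟩ := hFbij.surjOn (Set.mem_univ p)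
    rw [← hxp, hGF x hx]
    exact hx
  have hGS : ∀ p : Vec n, (G p).1 ∈ SigMinus ω := fun p => (hGmem p).1
  -- W never vanishes
  have hW0 : ∀ p, W p ≠ 0 := by
    intro p hp0
    have hz : (G p).1 ∈ SigMinus ω := hGS p
    have hzr : F.γ (G p).1 (G p).2 = p := hFGp p
    have h1 : HasDerivAt (fun s => G (F.γ (G p).1 s)) ((fderiv ℝ G p) (W p)) (G p).2 := by
      have hGd : HasFDerivAt G (fderiv ℝ G (F.γ (G p).1 (G p).2)) (F.γ (G p).1 (G p).2) :=
        ((hGc.differentiable (by simp)) (F.γ (G p).1 (G p).2)).hasFDerivAt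
      have h := hGd.comp_hasDerivAt (G p).2 (hγd (G p).1 hz (G p).2)
      rw [hzr] at h
      exact h
    have h2 : HasDerivAt (fun s => G (F.γ (G p).1 s)) (((0:Vec n), (1:ℝ))) (G p).2 := by
      have heq : (fun s : ℝ => G (F.γ (G p).1 s)) = fun s => ((G p).1, s) := by
        funext s
        exact hGF ((G p).1, s) ⟨hz, Set.mem_univ s⟩
      rw [heq]
      exact (hasDerivAt_const (G p).2 (G p).1).prodMk (hasDerivAt_id (G p).2)
    have h3 := h1.unique h2
    rw [hp0, map_zero] at h3
    have h4 : (0:ℝ) = 1 := congrArg Prod.snd h3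
    exact zero_ne_one h4
  -- the flat region
  have hgK : ∀ p : Vec n, ⟪p.2, ω⟫ ≤ -1 → ∀ v w, M.g p v w = mink v w :=
    fun p hp => (region_flat M O h11 hω hp).1
  have hZK : ∀ p : Vec n, ⟪p.2, ω⟫ ≤ -1 → O.Z p = ((1:ℝ), (0:Evec n)) :=
    fun p hp => (region_flat M O h11 hω hp).2
  have hωω : ⟪ω, ω⟫ = (1:ℝ) := by
    rw [real_inner_self_eq_norm_sq, hω, one_pow]
  set A : Vec n →L[ℝ] ℝ :=
    ContinuousLinearMap.fst ℝ ℝ (Evec n) -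
      (innerSL ℝ ω).comp (ContinuousLinearMap.snd ℝ ℝ (Evec n)) with hAdef
  have hA : ∀ w : Vec n, A w = w.1 - ⟪w.2, ω⟫ := by
    intro w
    simp only [hAdef, ContinuousLinearMap.sub_apply, ContinuousLinearMap.coe_fst',
      ContinuousLinearMap.comp_apply, ContinuousLinearMap.coe_snd', innerSL_apply_apply]
    rw [real_inner_comm]
  have hfφK : ∀ p : Vec n, ⟪p.2, ω⟫ ≤ -1 → ∀ w : Vec n, fderiv ℝ φ p w = w.1 - ⟪w.2, ω⟫ := by
    intro p hp
    set ψ : Vec n → ℝ := fun q => φ q - A q with hψdef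
    have hψd : Differentiable ℝ ψ := (hφ.differentiable (by simp)).sub A.differentiable
    have hψ0 : ∀ q : Vec n, ⟪q.2, ω⟫ ≤ -1 → ψ q = 0 := by
      intro q hq
      simp only [hψdef]
      rw [hbc q hq, hA q]
      ring
    have hdir : ∀ v : Vec n, ⟪v.2, ω⟫ ≤ 0 → fderiv ℝ ψ p v = 0 := by
      intro v hv
      have hcurve0 : ∀ t : ℝ, t ∈ Set.Ici (0:ℝ) → ψ (p + t • v) = 0 := by
        intro t ht
        apply hψ0
        have hin : ⟪(p + t • v).2, ω⟫ = ⟪p.2, ω⟫ + t * ⟪v.2, ω⟫ := by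
          have h2 : (p + t • v).2 = p.2 + t • v.2 := rfl
          rw [h2, inner_add_left, real_inner_smul_left]
        rw [hin]
        nlinarith [mul_nonneg (Set.mem_Ici.mp ht) (neg_nonneg.mpr hv)]
      have hline : HasDerivAt (fun t : ℝ => p + t • v) v 0 := by
        simpa using ((hasDerivAt_id (0:ℝ)).smul_const v).const_add p
      have hFψ : HasFDerivAt ψ (fderiv ℝ ψ p) ((fun t : ℝ => p + t • v) 0) := by
        simpa using (hψd p).hasFDerivAt
      have hcd : HasDerivAt (fun t : ℝ => ψ (p + t • v)) ((fderiv ℝ ψ p) v) 0 :=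
        by have := hFψ.comp_hasDerivAt 0 hline; exact this
      have h1 := hcd.hasDerivWithinAt (s := Set.Ici (0:ℝ))
      have h2 : HasDerivWithinAt (fun t : ℝ => ψ (p + t • v)) 0 (Set.Ici (0:ℝ)) 0 :=
        (hasDerivWithinAt_const 0 (Set.Ici (0:ℝ)) (0:ℝ)).congr hcurve0 (hcurve0 0 Set.self_mem_Ici)
      have e1 := h1.derivWithin (uniqueDiffOn_Ici 0 0 Set.self_mem_Ici)
      have e2 := h2.derivWithin (uniqueDiffOn_Ici 0 0 Set.self_mem_Ici)
      rw [← e1]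
      exact e2
    have hzero : ∀ w : Vec n, fderiv ℝ ψ p w = 0 := by
      intro w
      set cm : ℝ := max 0 ⟪w.2, ω⟫ with hcm
      have hcw : ⟪w.2, ω⟫ ≤ cm := le_max_right _ _
      have h1 : fderiv ℝ ψ p (w - cm • (((0:ℝ), ω) : Vec n)) = 0 := by
        apply hdir
        have hsnd : (w - cm • (((0:ℝ), ω) : Vec n)).2 = w.2 - cm • ω := by simp
        rw [hsnd, inner_sub_left, real_inner_smul_left, hωω, mul_one]
        linarith
      have h2 : fderiv ℝ ψ p ((((0:ℝ), -ω)) : Vec n) = 0 := by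
        apply hdir
        show ⟪-ω, ω⟫ ≤ (0:ℝ)
        rw [inner_neg_left, hωω]
        linarith
      have h3 : fderiv ℝ ψ p ((((0:ℝ), ω)) : Vec n) = 0 := by
        have hne : ((((0:ℝ), ω)) : Vec n) = -((((0:ℝ), -ω)) : Vec n) := by
          apply Prod.ext_iff.mpr
          constructor <;> simp
        rw [hne, map_neg, h2, neg_zero]
      calc fderiv ℝ ψ p w
          = fderiv ℝ ψ p ((w - cm • (((0:ℝ), ω) : Vec n)) + cm • (((0:ℝ), ω) : Vec n)) := by
            rw [sub_add_cancel]
        _ = fderiv ℝ ψ p (w - cm • (((0:ℝ), ω) : Vec n))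
              + cm * fderiv ℝ ψ p (((0:ℝ), ω) : Vec n) := by
            rw [map_add, map_smul, smul_eq_mul]
        _ = 0 := by rw [h1, h3]; ring
    intro w
    have hfd : fderiv ℝ φ p = fderiv ℝ ψ p + A := by
      have hsum : fderiv ℝ (fun q => ψ q + A q) p = fderiv ℝ ψ p + A := by
        rw [show (fun q => ψ q + A q) = ψ + ⇑A from rfl, fderiv_add (hψd p) A.differentiable.differentiableAt, A.fderiv]
      rw [← hsum]
      congr 1
      funext q
      simp [hψdef]
    rw [hfd, ContinuousLinearMap.add_apply, hzero w, hA w, zero_add]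
  have hWK : ∀ p : Vec n, ⟪p.2, ω⟫ ≤ -1 → W p = (((1 : ℝ), ω) : Vec n) := by
    intro p hp
    apply g_ext M p
    intro x
    rw [hW p x, hfφK p hp x, hgK p hp (((1:ℝ), ω) : Vec n) x]
    simp only [mink]
    rw [real_inner_comm ω x.2]
    ring
  -- time orientation of W, by connectedness
  have hWZ : ∀ p : Vec n, M.g p (W p) (O.Z p) < 0 := by
    set f : Vec n → ℝ := fun p => -(fderiv ℝ φ p (O.Z p)) with hfdef
    have hfg : ∀ p, M.g p (W p) (O.Z p) = f p := by
      intro p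
      simp only [hfdef]
      exact hW p (O.Z p)
    have hfc : Continuous f := by
      have h1 : Continuous fun p : Vec n => fderiv ℝ φ p :=
        (hφ.fderiv_right (m := (⊤ : ℕ∞)) (by simp)).continuous
      exact (h1.clm_apply O.smooth.continuous).neg
    have hne : ∀ p, f p ≠ 0 := by
      intro p h0
      rw [← hfg p] at h0
      obtain ⟨L, hL⟩ := M.sig p
      have hu0 : L (W p) ≠ 0 := fun h => hW0 p (L.map_eq_zero_iff.mp h)
      apply hu0
      apply mink_null_orth (z := L (O.Z p))
      · rw [← hL]; exact hWnull p
      · rw [← hL]; exact O.timelike p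
      · rw [← hL]; exact h0
    have hmem0 : ⟪((((0:ℝ), -ω)) : Vec n).2, ω⟫ ≤ -1 := by
      show ⟪-ω, ω⟫ ≤ (-1:ℝ)
      rw [inner_neg_left, hωω]
    have hp0 : f ((((0:ℝ), -ω)) : Vec n) < 0 := by
      rw [← hfg]
      rw [hgK _ hmem0, hWK _ hmem0, hZK _ hmem0]
      simp [mink]
    intro p
    rw [hfg p]
    rcases lt_or_ge (f p) 0 with h | h
    · exact h
    · exfalso
      have h0 : (0:ℝ) ∈ Set.Icc (f ((((0:ℝ), -ω)) : Vec n)) (f p) := ⟨le_of_lt hp0, h⟩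
      obtain ⟨q, hq⟩ := intermediate_value_univ ((((0:ℝ), -ω)) : Vec n) p hfc h0
      exact hne q hq
  have hfuture : ∀ p : Vec n, FutureDir M O p (W p) :=
    fun p => ⟨⟨hW0 p, le_of_eq (hWnull p)⟩, hWZ p⟩
  -- integral curves of W are the geodesics
  have hflow : ∀ (c : ℝ → Vec n) (a b : ℝ), a < b →
      (∀ r ∈ Set.Ioo a b, HasDerivAt c (W (c r)) r) →
      ∃ z ∈ SigMinus ω, ∃ t₀ : ℝ, ∀ r ∈ Set.Ioo a b, c r = F.γ z (r - t₀) := by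
    intro c a b hab hc
    have hGder : ∀ p : Vec n, (fderiv ℝ G p) (W p) = ((((0:Vec n), (1:ℝ))) : Vec n × ℝ) := by
      intro p
      have hz : (G p).1 ∈ SigMinus ω := hGS p
      have hzs : F.γ (G p).1 (G p).2 = p := hFGp p
      have h1 : HasDerivAt (fun r => G (F.γ (G p).1 r)) ((fderiv ℝ G p) (W p)) (G p).2 := by
        have hGd : HasFDerivAt G (fderiv ℝ G (F.γ (G p).1 (G p).2)) (F.γ (G p).1 (G p).2) :=
          ((hGc.differentiable (by simp)) (F.γ (G p).1 (G p).2)).hasFDerivAt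
        have h := hGd.comp_hasDerivAt (G p).2 (hγd (G p).1 hz (G p).2)
        rw [hzs] at h
        exact h
      have h2 : HasDerivAt (fun r => G (F.γ (G p).1 r)) (((0:Vec n), (1:ℝ))) (G p).2 := by
        have heq : (fun r : ℝ => G (F.γ (G p).1 r)) = fun r => ((G p).1, r) := by
          funext r
          exact hGF ((G p).1, r) ⟨hz, Set.mem_univ r⟩
        rw [heq]
        exact (hasDerivAt_const (G p).2 (G p).1).prodMk (hasDerivAt_id (G p).2)
      exact h1.unique h2
    set u : ℝ → Vec n × ℝ := fun r => G (c r) with hudef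
    set k : ℝ → Vec n × ℝ := fun r => u r - ((0:Vec n), r) with hkdef
    have hk : ∀ r ∈ Set.Ioo a b, HasDerivAt k 0 r := by
      intro r hr
      have h1 : HasDerivAt u ((fderiv ℝ G (c r)) (W (c r))) r := by
        have hGd : HasFDerivAt G (fderiv ℝ G (c r)) (c r) :=
          ((hGc.differentiable (by simp)) (c r)).hasFDerivAt
        exact hGd.comp_hasDerivAt r (hc r hr)
      rw [hGder (c r)] at h1
      have h2 : HasDerivAt (fun r : ℝ => (((0:Vec n), r) : Vec n × ℝ)) (((0:Vec n), (1:ℝ))) r :=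
        (hasDerivAt_const r (0:Vec n)).prodMk (hasDerivAt_id r)
      have h3 := h1.sub h2
      simpa [hkdef, Pi.sub_def] using h3
    have hconst := const_of_hasDerivAt_zero hk
    have hr₀ : (a+b)/2 ∈ Set.Ioo a b := by
      constructor <;> [linarith; linarith]
    refine ⟨(u ((a+b)/2)).1, ?_, (a+b)/2 - (u ((a+b)/2)).2, ?_⟩
    · exact hGS (c ((a+b)/2))
    · intro r hr
      have hk0 : k r = k ((a+b)/2) := hconst r hr ((a+b)/2) hr₀
      have hur : u r = ((u ((a+b)/2)).1, r - ((a+b)/2 - (u ((a+b)/2)).2)) := by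
        have he1 : u r = k r + (((0:Vec n), r) : Vec n × ℝ) := by simp [hkdef]
        rw [he1, hk0]
        apply Prod.ext_iff.mpr
        constructor
        · simp [hkdef]
        · simp only [hkdef, Prod.snd_add, Prod.snd_sub]
          ring
      have hcr : c r = F.γ (u r).1 (u r).2 := by
        rw [hudef]
        exact (hFGp (c r)).symm
      rw [hcr, hur]
  -- the key pointwise inequality
  have hkey : ∀ (p v : Vec n), v ≠ 0 → M.g p v v ≤ 0 → M.g p v (O.Z p) < 0 →
      M.g p (W p) v ≤ 0 ∧ (M.g p (W p) v = 0 ↔ ∃ l : ℝ, 0 < l ∧ v = l • W p) :=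
    fun p v hv0 hvv hvz =>
      g_key M p (hW0 p) (hWnull p) hv0 hvv (O.timelike p) (hWZ p) hvz
  refine ⟨⟨fun p => ⟨hfuture p, hWnull p⟩, hdφW, hWK, hγd, hflow⟩, ?_, ?_⟩
  · -- future-directed causal curves
    intro c a b hab hc hd r hr
    have hop : IsOpen (Set.Ioo a b) := isOpen_Ioo
    have hdiff : DifferentiableAt ℝ c r :=
      (hc.contDiffAt (hop.mem_nhds hr)).differentiableAt (by simp)
    have hvd : derivWithin c (Set.Ioo a b) r = deriv c r := derivWithin_of_isOpen hop hr
    have hcd : HasDerivAt c (derivWithin c (Set.Ioo a b) r) r := by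
      rw [hvd]; exact hdiff.hasDerivAt
    have hφc : HasDerivAt (fun s => φ (c s))
        ((fderiv ℝ φ (c r)) (derivWithin c (Set.Ioo a b) r)) r :=
      ((hφ.differentiable (by simp)) (c r)).hasFDerivAt.comp_hasDerivAt r hcd
    have hDW : derivWithin (fun s => φ (c s)) (Set.Ioo a b) r
        = (fderiv ℝ φ (c r)) (derivWithin c (Set.Ioo a b) r) := by
      rw [derivWithin_of_isOpen hop hr]
      exact hφc.deriv
    obtain ⟨⟨hv0, hvv⟩, hvz⟩ := hd r hr
    obtain ⟨hle, hiff⟩ := hkey (c r) _ hv0 hvv hvz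
    have hWv : (fderiv ℝ φ (c r)) (derivWithin c (Set.Ioo a b) r)
        = -(M.g (c r) (W (c r)) (derivWithin c (Set.Ioo a b) r)) := by
      rw [hW]; ring
    constructor
    · rw [hDW, hWv]; linarith
    · rw [hDW, hWv, neg_eq_zero]
      exact hiff
  · -- past-directed causal curves
    intro c a b hab hc hd r hr
    have hop : IsOpen (Set.Ioo a b) := isOpen_Ioo
    have hdiff : DifferentiableAt ℝ c r :=
      (hc.contDiffAt (hop.mem_nhds hr)).differentiableAt (by simp)
    have hvd : derivWithin c (Set.Ioo a b) r = deriv c r := derivWithin_of_isOpen hop hr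
    have hcd : HasDerivAt c (derivWithin c (Set.Ioo a b) r) r := by
      rw [hvd]; exact hdiff.hasDerivAt
    have hφc : HasDerivAt (fun s => φ (c s))
        ((fderiv ℝ φ (c r)) (derivWithin c (Set.Ioo a b) r)) r :=
      ((hφ.differentiable (by simp)) (c r)).hasFDerivAt.comp_hasDerivAt r hcd
    have hDW : derivWithin (fun s => φ (c s)) (Set.Ioo a b) r
        = (fderiv ℝ φ (c r)) (derivWithin c (Set.Ioo a b) r) := by
      rw [derivWithin_of_isOpen hop hr]
      exact hφc.deriv
    obtain ⟨⟨hv0, hvv⟩, hvz⟩ := hd r hr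
    set v : Vec n := derivWithin c (Set.Ioo a b) r with hvdef
    have hnv0 : -v ≠ 0 := neg_ne_zero.mpr hv0
    have hgneg2 : M.g (c r) (-v) (-v) = M.g (c r) v v := by
      simp only [map_neg, ContinuousLinearMap.neg_apply, neg_neg]
    have hgvv : M.g (c r) (-v) (-v) ≤ 0 := by rw [hgneg2]; exact hvv
    have hgvz : M.g (c r) (-v) (O.Z (c r)) < 0 := by
      have : M.g (c r) (-v) (O.Z (c r)) = -(M.g (c r) v (O.Z (c r))) := by
        simp only [map_neg, ContinuousLinearMap.neg_apply]
      rw [this]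
      linarith
    obtain ⟨hle, hiff⟩ := hkey (c r) (-v) hnv0 hgvv hgvz
    have hneg : M.g (c r) (W (c r)) (-v) = -(M.g (c r) (W (c r)) v) :=
      (M.g (c r) (W (c r))).map_neg v
    have hWv : (fderiv ℝ φ (c r)) v = -(M.g (c r) (W (c r)) v) := by
      rw [hW]; ring
    rw [hneg] at hle
    constructor
    · rw [hDW, hWv]
      exact hle
    · rw [hDW, hWv, neg_eq_zero]
      constructor
      · intro h0
        have h0' : M.g (c r) (W (c r)) (-v) = 0 := by rw [hneg, h0, neg_zero]
        obtain ⟨l, hl, hvl⟩ := hiff.mp h0'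
        refine ⟨l, hl, ?_⟩
        have h5 := congrArg Neg.neg hvl
        rw [neg_neg] at h5
        rw [h5, neg_smul]
      · rintro ⟨l, hl, hvl⟩
        have h6 : -v = l • W (c r) := by
          rw [hvl, neg_smul, neg_neg]
        have h1 : M.g (c r) (W (c r)) (-v) = 0 := hiff.mpr ⟨l, hl, h6⟩
        rw [hneg] at h1
        linarith


end
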